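/- Assume the Unique Minimizer assumption. Then V*(λ*) = φ(S*)², and for every λ ∈ Δ with λ ≠ λ* one has V*(λ) > φ(S*)²; that is, λ* is the unique minimizer of the asymptotic posterior variance V* over the simplex Δ. -/

import Mathlib

/-!
Writing `M(λ) = Σᵢ λᵢ cᵢcᵢᵀ`, the regularised entries `[(M(λ) + εI)⁻¹]₁₁` increase as `ε ↓ 0` to
`sup_y (2 y₁ - yᵀ M(λ) y)`, which is `x₁` if `M(λ) x = e₁` and `∞` if `e₁ ∉ range M(λ)`.
A solution `x` yields the representation `e₁ = Σᵢ bᵢ cᵢ` with `bᵢ = λᵢ (cᵢ ⬝ x)`, and for `λ` in the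
simplex `x₁ = Σᵢ λᵢ (cᵢ ⬝ x)² ≥ (Σᵢ λᵢ |cᵢ ⬝ x|)² = ‖b‖₁² ≥ φ(S*)²`: the `ℓ¹`-least representation
of `e₁` has independent support, so under the unique-minimiser assumption it is `β^{S*}`, and
uniquely so. Equality forces `b = β^{S*}` and `|cᵢ ⬝ x| = φ(S*)` wherever `λᵢ ≠ 0`, i.e. `λ = λ*`.
At `λ*`, AM–GM bounds `2 y₁ = 2 Σᵢ β^{S*}ᵢ (cᵢ ⬝ y)` by `yᵀ M(λ*) y + φ(S*)²`.
-/

open Matrix Finset Filter Topology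

noncomputable section

namespace LearningTraps

variable {K N : ℕ}

/-- The information matrix `Σᵢ qᵢ · cᵢ cᵢᵀ`. -/
def infoMat (c : Fin N → Fin K → ℝ) (q : Fin N → ℝ) : Matrix (Fin K) (Fin K) ℝ :=
  ∑ i, q i • Matrix.vecMulVec (c i) (c i)

/-- Posterior variance `V_Σ(q) = [(Σ⁻¹ + Σᵢ qᵢ cᵢcᵢᵀ)⁻¹]₁₁`. -/
def postVar (hK : 0 < K) (c : Fin N → Fin K → ℝ)
    (Cov : Matrix (Fin K) (Fin K) ℝ) (q : Fin N → ℝ) : ℝ :=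
  (Cov⁻¹ + infoMat c q)⁻¹ ⟨0, hK⟩ ⟨0, hK⟩

/-- Posterior variance at integer signal counts. -/
def pv (hK : 0 < K) (c : Fin N → Fin K → ℝ)
    (Cov : Matrix (Fin K) (Fin K) ℝ) (q : Fin N → ℕ) : ℝ :=
  postVar hK c Cov fun i => (q i : ℝ)

/-- First standard basis vector of `ℝ^K`. -/
def e1 (hK : 0 < K) : Fin K → ℝ := Pi.single ⟨0, hK⟩ 1

/-- `S` is spanning: `e₁` lies in the span of `{cᵢ : i ∈ S}`. -/
def Spanning (hK : 0 < K) (c : Fin N → Fin K → ℝ) (S : Finset (Fin N)) : Prop :=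
  e1 hK ∈ Submodule.span ℝ (c '' ↑S)

/-- `S` is minimally spanning. -/
def MinSpanning (hK : 0 < K) (c : Fin N → Fin K → ℝ) (S : Finset (Fin N)) : Prop :=
  Spanning hK c S ∧ ∀ T ⊂ S, ¬ Spanning hK c T

/-- `β` represents `e₁` using only signals in `S`. -/
def IsRep (hK : 0 < K) (c : Fin N → Fin K → ℝ) (S : Finset (Fin N)) (β : Fin N → ℝ) : Prop :=
  (∀ i ∉ S, β i = 0) ∧ ∑ i, β i • c i = e1 hK

open Classical in
/-- The coefficients `β^S` (unique when `S` is minimally spanning). -/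
def betaVec (hK : 0 < K) (c : Fin N → Fin K → ℝ) (S : Finset (Fin N)) : Fin N → ℝ :=
  if h : ∃ β, IsRep hK c S β then h.choose else 0

/-- `φ(S) = Σ_{i∈S} |β^S_i|`. -/
def phi (hK : 0 < K) (c : Fin N → Fin K → ℝ) (S : Finset (Fin N)) : ℝ :=
  ∑ i, |betaVec hK c S i|

/-- The frequency vector `λ^S`. -/
def freq (hK : 0 < K) (c : Fin N → Fin K → ℝ) (S : Finset (Fin N)) : Fin N → ℝ :=
  fun i => |betaVec hK c S i| / phi hK c S

/-- The Unique Minimizer assumption: `Sstar` is the unique minimizer of `φ`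
among minimally spanning sets. -/
def UniqueMin (hK : 0 < K) (c : Fin N → Fin K → ℝ) (Sstar : Finset (Fin N)) : Prop :=
  MinSpanning hK c Sstar ∧
    ∀ S, MinSpanning hK c S → S ≠ Sstar → phi hK c Sstar < phi hK c S

/-- A `t`-optimal division of observations. -/
def TOptimal (hK : 0 < K) (c : Fin N → Fin K → ℝ) (Cov : Matrix (Fin K) (Fin K) ℝ)
    (t : ℕ) (q : Fin N → ℕ) : Prop :=
  (∑ i, q i) = t ∧ ∀ q' : Fin N → ℕ, (∑ i, q' i) = t → pv hK c Cov q ≤ pv hK c Cov q'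

/-- A greedy (myopic) acquisition sequence. -/
def Greedy (hK : 0 < K) (c : Fin N → Fin K → ℝ) (Cov : Matrix (Fin K) (Fin K) ℝ)
    (m : ℕ → Fin N → ℕ) : Prop :=
  m 0 = 0 ∧ ∀ t, ∃ i, m (t + 1) = m t + Pi.single i 1 ∧
    ∀ j, pv hK c Cov (m t + Pi.single i 1) ≤ pv hK c Cov (m t + Pi.single j 1)

open Classical in
/-- The set `A̅` of all signals whose coefficient vector lies in the span of `{cⱼ : j ∈ A}`. -/
def subClosure (c : Fin N → Fin K → ℝ) (A : Finset (Fin N)) : Finset (Fin N) :=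
  Finset.univ.filter fun i => c i ∈ Submodule.span ℝ (c '' ↑A)

/-- `S` is subspace-optimal: it uniquely minimizes `φ` among minimally spanning subsets
of its own subspace closure. -/
def SubspaceOptimal (hK : 0 < K) (c : Fin N → Fin K → ℝ) (S : Finset (Fin N)) : Prop :=
  MinSpanning hK c S ∧
    ∀ T ⊆ subClosure c S, MinSpanning hK c T → T ≠ S → phi hK c S < phi hK c T

/-- The asymptotic posterior variance `V*`, valued in `[0,∞]`. -/
def Vstar (hK : 0 < K) (c : Fin N → Fin K → ℝ) (l : Fin N → ℝ) : ENNReal :=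
  ⨆ (ε : ℝ) (_ : 0 < ε),
    ENNReal.ofReal ((infoMat c l + ε • (1 : Matrix (Fin K) (Fin K) ℝ))⁻¹ ⟨0, hK⟩ ⟨0, hK⟩)

section Variational

variable {n : Type*} [Fintype n] [DecidableEq n] {M : Matrix n n ℝ} {i : n} {x : n → ℝ}

lemma dotProduct_mulVec_eq_of_mulVec_eq_single (hx : M *ᵥ x = Pi.single i 1) :
    x ⬝ᵥ (M *ᵥ x) = x i := by
  rw [hx, dotProduct_single, mul_one]

lemma two_mul_sub_dotProduct_mulVec_le (hM : M.PosSemidef) (hx : M *ᵥ x = Pi.single i 1)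
    (y : n → ℝ) : 2 * y i - y ⬝ᵥ (M *ᵥ y) ≤ x i := by
  have hsq : 0 ≤ (y - x) ⬝ᵥ (M *ᵥ (y - x)) := hM.dotProduct_mulVec_nonneg (y - x)
  have hMt : Mᵀ = M := by
    rw [← conjTranspose_eq_transpose_of_trivial]; exact hM.isHermitian
  have hyx : y ⬝ᵥ (M *ᵥ x) = y i := by rw [hx, dotProduct_single, mul_one]
  have hxy : x ⬝ᵥ (M *ᵥ y) = y i := by
    rw [dotProduct_mulVec, ← mulVec_transpose, hMt, hx, single_dotProduct, one_mul]
  rw [mulVec_sub, dotProduct_sub, sub_dotProduct, sub_dotProduct, hyx, hxy,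
    dotProduct_mulVec_eq_of_mulVec_eq_single hx] at hsq
  linarith

lemma iSup_eq_ofReal_of_mulVec_eq_single (hM : M.PosSemidef) (hx : M *ᵥ x = Pi.single i 1) :
    ⨆ y, ENNReal.ofReal (2 * y i - y ⬝ᵥ (M *ᵥ y)) = ENNReal.ofReal (x i) := by
  refine le_antisymm (iSup_le fun y => ENNReal.ofReal_le_ofReal
    (two_mul_sub_dotProduct_mulVec_le hM hx y)) (le_iSup_of_le x (le_of_eq ?_))
  rw [dotProduct_mulVec_eq_of_mulVec_eq_single hx]
  ring_nf

/-- A functional separating `eᵢ` from `range M` is `z ⬝ᵥ ·` for some `z` with `zᵀ M z = 0` and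
`zᵢ ≠ 0`; the objective is unbounded along `z`. -/
lemma iSup_eq_top_of_forall_mulVec_ne_single (h : ∀ x, M *ᵥ x ≠ Pi.single i 1) :
    ⨆ y, ENNReal.ofReal (2 * y i - y ⬝ᵥ (M *ᵥ y)) = ⊤ := by
  have hi : Pi.single i 1 ∉ LinearMap.range M.mulVecLin := by
    rintro ⟨x, hx⟩; exact h x hx
  obtain ⟨f, hfi, hf⟩ := Submodule.exists_dual_map_eq_bot_of_notMem hi inferInstance
  set z := (dotProductEquiv ℝ n).symm f
  have hfz : ∀ v, f v = z ⬝ᵥ v := fun v => by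
    rw [← dotProductEquiv_apply_apply, LinearEquiv.apply_symm_apply]
  have hzi : z i ≠ 0 := by
    rwa [← mul_one (z i), ← dotProduct_single, ← hfz]
  have hzMz : z ⬝ᵥ (M *ᵥ z) = 0 := by
    rw [← hfz, ← Submodule.mem_bot ℝ, ← hf]
    exact Submodule.mem_map_of_mem (LinearMap.mem_range_self M.mulVecLin z)
  refine ENNReal.eq_top_of_forall_nnreal_le fun r => le_iSup_of_le ((r / z i) • z) ?_
  rw [mulVec_smul, dotProduct_smul, smul_dotProduct, hzMz]
  simp only [Pi.smul_apply, smul_eq_mul, div_mul_cancel₀ _ hzi, mul_zero, sub_zero]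
  rw [← ENNReal.ofReal_coe_nnreal]
  exact ENNReal.ofReal_le_ofReal (by linarith [r.2])

lemma dotProduct_add_smul_one_mulVec (M : Matrix n n ℝ) (ε : ℝ) (y : n → ℝ) :
    y ⬝ᵥ ((M + ε • 1) *ᵥ y) = y ⬝ᵥ (M *ᵥ y) + ε * (y ⬝ᵥ y) := by
  rw [add_mulVec, smul_mulVec, one_mulVec, dotProduct_add, dotProduct_smul, smul_eq_mul]

lemma iSup_inv_add_smul_one_apply_eq_iSup (hM : M.PosSemidef) :
    ⨆ (ε : ℝ) (_ : 0 < ε), ENNReal.ofReal ((M + ε • 1)⁻¹ i i)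
      = ⨆ y, ENNReal.ofReal (2 * y i - y ⬝ᵥ (M *ᵥ y)) := by
  have hpd : ∀ ε : ℝ, 0 < ε → (M + ε • 1).PosDef := fun ε hε =>
    PosDef.posSemidef_add hM (PosDef.one.smul hε)
  have hsol : ∀ ε : ℝ, 0 < ε → (M + ε • 1) *ᵥ ((M + ε • 1)⁻¹ *ᵥ Pi.single i 1) = Pi.single i 1 :=
    fun ε hε => by
      rw [mulVec_mulVec, mul_nonsing_inv _ ((isUnit_iff_isUnit_det _).mp (hpd ε hε).isUnit),
        one_mulVec]
  have hentry : ∀ ε : ℝ, ((M + ε • 1)⁻¹ *ᵥ Pi.single i 1) i = (M + ε • 1)⁻¹ i i := fun ε => by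
    simp
  apply le_antisymm
  · refine iSup₂_le fun ε hε => le_iSup_of_le ((M + ε • 1)⁻¹ *ᵥ Pi.single i 1) ?_
    refine ENNReal.ofReal_le_ofReal ?_
    have hx := dotProduct_mulVec_eq_of_mulVec_eq_single (hsol ε hε)
    rw [dotProduct_add_smul_one_mulVec] at hx
    rw [← hentry]
    have := mul_nonneg hε.le (dotProduct_self_star_nonneg ((M + ε • 1)⁻¹ *ᵥ Pi.single i 1))
    rw [star_trivial] at this
    linarith
  · refine iSup_le fun y => ?_
    have hlim : Tendsto (fun ε : ℝ => ENNReal.ofReal (2 * y i - y ⬝ᵥ ((M + ε • 1) *ᵥ y)))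
        (𝓝[>] 0) (𝓝 (ENNReal.ofReal (2 * y i - y ⬝ᵥ (M *ᵥ y)))) := by
      simp_rw [dotProduct_add_smul_one_mulVec]
      refine (ENNReal.continuous_ofReal.tendsto _).comp (tendsto_nhdsWithin_of_tendsto_nhds ?_)
      have : Continuous fun ε : ℝ => 2 * y i - (y ⬝ᵥ (M *ᵥ y) + ε * (y ⬝ᵥ y)) := by fun_prop
      simpa using this.tendsto 0
    refine le_of_tendsto hlim (eventually_nhdsWithin_of_forall fun ε hε => ?_)
    exact le_iSup₂_of_le ε hε (ENNReal.ofReal_le_ofReal (hentry ε ▸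
      two_mul_sub_dotProduct_mulVec_le (hpd ε hε).posSemidef (hsol ε hε) y))

end Variational

lemma sum_mul_sq_eq_sq_add_sum_mul_sq_sub {ι : Type*} [Fintype ι] (w a : ι → ℝ)
    (hw : ∑ i, w i = 1) :
    ∑ i, w i * a i ^ 2 = (∑ i, w i * a i) ^ 2 + ∑ i, w i * (a i - ∑ j, w j * a j) ^ 2 := by
  have key : ∀ m, ∑ i, w i * (a i - m) ^ 2 = ∑ i, w i * a i ^ 2 - 2 * m * ∑ i, w i * a i + m ^ 2 :=
    fun m => by
      rw [mul_sum, ← mul_one (m ^ 2), ← hw, mul_sum, ← sum_sub_distrib, ← sum_add_distrib]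
      exact sum_congr rfl fun i _ => by ring
  rw [key]; ring

lemma two_mul_mul_le_div_mul_sq_add (β t : ℝ) {φ : ℝ} (hφ : 0 < φ) :
    2 * (β * t) ≤ |β| / φ * t ^ 2 + |β| * φ := by
  have h1 : 0 ≤ |β| / φ * (|t| - φ) ^ 2 := by positivity
  have h2 : β * t ≤ |β| * |t| := by rw [← abs_mul]; exact le_abs_self _
  have h3 : |β| / φ * (|t| - φ) ^ 2 = |β| / φ * t ^ 2 - 2 * (|β| * |t|) + |β| * φ := by
    rw [← sq_abs t]; field_simp; ring
  linarith

section SupportReduction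

variable {ι : Type*} [Fintype ι] {b γ : ι → ℝ}

lemma abs_add_eq_abs_add_sign_mul {x y : ℝ} (h : 0 ≤ x * (x + y)) (hy : x = 0 → y = 0) :
    |x + y| = |x| + Real.sign x * y := by
  rcases lt_trichotomy x 0 with hx | rfl | hx
  · have : x + y ≤ 0 := by nlinarith
    rw [abs_of_nonpos this, abs_of_neg hx, Real.sign_of_neg hx]
    ring
  · simp [hy rfl]
  · have : 0 ≤ x + y := by nlinarith
    rw [abs_of_nonneg this, abs_of_pos hx, Real.sign_of_pos hx]
    ring

lemma exists_mul_neg_of_sum_sign_mul_nonpos (hsupp : ∀ i, b i = 0 → γ i = 0) (hγ : γ ≠ 0)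
    (hd : ∑ i, Real.sign (b i) * γ i ≤ 0) : ∃ i, b i * γ i < 0 := by
  by_contra! h
  have hterm : ∀ i, 0 ≤ Real.sign (b i) * γ i := by
    intro i
    rcases lt_trichotomy (b i) 0 with hb | hb | hb
    · rw [Real.sign_of_neg hb]; nlinarith [h i]
    · simp [hb]
    · rw [Real.sign_of_pos hb]; nlinarith [h i]
  obtain ⟨j, hj⟩ := Function.ne_iff.mp hγ
  have hbj : Real.sign (b j) ≠ 0 := Real.sign_eq_zero_iff.not.mpr (mt (hsupp j) hj)
  have := sum_pos' (fun i _ => hterm i) ⟨j, mem_univ j, (hterm j).lt_of_ne' (mul_ne_zero hbj hj)⟩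
  linarith

lemma exists_pos_mul_add_smul_nonneg (h : ∃ i, b i * γ i < 0) :
    ∃ s : ℝ, 0 < s ∧ ∃ j, b j ≠ 0 ∧ (b + s • γ) j = 0 ∧ ∀ i, 0 ≤ b i * (b + s • γ) i := by
  classical
  obtain ⟨j, hj, hmin⟩ := Finset.exists_min_image (univ.filter fun i => b i * γ i < 0)
    (fun i => -b i / γ i) (by simpa [Finset.filter_nonempty_iff] using h)
  simp only [mem_filter, mem_univ, true_and] at hj hmin
  have hγj : γ j ≠ 0 := by rintro h0; simp [h0] at hj
  have hs : 0 < -b j / γ j := by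
    rw [show -b j / γ j = -(b j * γ j) / γ j ^ 2 by field_simp]
    exact div_pos (neg_pos.mpr hj) (by positivity)
  refine ⟨-b j / γ j, hs, j, by rintro h0; simp [h0] at hj, ?_, fun i => ?_⟩
  · simp [div_mul_cancel₀ _ hγj]
  · simp only [Pi.add_apply, Pi.smul_apply, smul_eq_mul]
    by_cases hi : b i * γ i < 0
    · have hγi : γ i ≠ 0 := by rintro h0; simp [h0] at hi
      have key : -b i / γ i * (b i * γ i) = -b i ^ 2 := by field_simp
      nlinarith [mul_le_mul_of_nonpos_right (hmin i hi) hi.le]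
    · nlinarith [mul_nonneg hs.le (not_lt.mp hi), sq_nonneg (b i)]

/-- `∑ᵢ sign(bᵢ) γᵢ` is the slope of `s ↦ ‖b + s • γ‖₁` up to the first `s > 0` at which a
coordinate of `b` vanishes; such an `s` exists when the slope is `≤ 0`. -/
lemma exists_card_support_lt_of_sum_sign_mul_nonpos (hsupp : ∀ i, b i = 0 → γ i = 0)
    (hγ : γ ≠ 0) (hd : ∑ i, Real.sign (b i) * γ i ≤ 0) :
    ∃ s : ℝ, 0 < s ∧
      #(univ.filter fun i => (b + s • γ) i ≠ 0) < #(univ.filter fun i => b i ≠ 0) ∧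
      ∑ i, |(b + s • γ) i| = ∑ i, |b i| + s * ∑ i, Real.sign (b i) * γ i := by
  obtain ⟨s, hs, j, hbj, hj, hnonneg⟩ :=
    exists_pos_mul_add_smul_nonneg (exists_mul_neg_of_sum_sign_mul_nonpos hsupp hγ hd)
  refine ⟨s, hs, card_lt_card ((ssubset_iff_of_subset fun i => ?_).mpr ⟨j, ?_⟩), ?_⟩
  · simp only [mem_filter, mem_univ, true_and, Pi.add_apply, Pi.smul_apply, smul_eq_mul]
    exact mt fun hbi => by simp [hbi, hsupp i hbi]
  · simpa using ⟨hbj, hj⟩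
  · rw [mul_sum, ← sum_add_distrib]
    refine sum_congr rfl fun i _ => ?_
    simp only [Pi.add_apply, Pi.smul_apply, smul_eq_mul] at hnonneg ⊢
    rw [abs_add_eq_abs_add_sign_mul (hnonneg i) fun hbi => by simp [hsupp i hbi]]
    ring

end SupportReduction

section Representations

variable (hK : 0 < K) (c : Fin N → Fin K → ℝ) {S : Finset (Fin N)}

lemma spanning_iff_exists_isRep : Spanning hK c S ↔ ∃ β, IsRep hK c S β := by
  classical
  rw [Spanning, Submodule.mem_span_image_finset_iff_exists_fun']
  constructor
  · rintro ⟨β, hβ⟩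
    refine ⟨fun i => if i ∈ S then β i else 0, fun i hi => if_neg hi, ?_⟩
    simpa [ite_smul, sum_ite_mem] using hβ
  · rintro ⟨β, hβS, hβ⟩
    refine ⟨β, ?_⟩
    rw [← hβ, sum_subset (subset_univ S) fun i _ hi => by simp [hβS i hi]]

variable {hK c}

lemma IsRep.spanning {β : Fin N → ℝ} (h : IsRep hK c S β) : Spanning hK c S :=
  (spanning_iff_exists_isRep hK c).mpr ⟨β, h⟩

lemma betaVec_isRep (hS : Spanning hK c S) : IsRep hK c S (betaVec hK c S) := by
  have h := (spanning_iff_exists_isRep hK c).mp hS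
  rw [betaVec, dif_pos h]
  exact h.choose_spec

lemma sum_add_smul_smul_eq (b : Fin N → ℝ) {γ : Fin N → ℝ} (hγ : ∑ i, γ i • c i = 0) (s : ℝ) :
    ∑ i, (b + s • γ) i • c i = ∑ i, b i • c i := by
  simp [add_smul, sum_add_distrib, mul_smul, ← smul_sum, hγ]

lemma IsRep.eq_of_minSpanning (hS : MinSpanning hK c S) {β β' : Fin N → ℝ}
    (hβ : IsRep hK c S β) (hβ' : IsRep hK c S β') : β = β' := by
  by_contra hne
  obtain ⟨j, hj⟩ := Function.ne_iff.mp hne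
  have hjS : j ∈ S := by_contra fun h => hj (by rw [hβ.1 j h, hβ'.1 j h])
  set s := β j / (β j - β' j)
  have hnull : ∑ i, (β' - β) i • c i = 0 := by
    simp [sub_smul, sum_sub_distrib, hβ.2, hβ'.2]
  refine hS.2 _ (erase_ssubset hjS) (IsRep.spanning (β := β + s • (β' - β)) ⟨fun i hi => ?_, ?_⟩)
  · rcases eq_or_ne i j with rfl | hij
    · have : β i - β' i ≠ 0 := sub_ne_zero.mpr hj
      simp only [Pi.add_apply, Pi.smul_apply, Pi.sub_apply, smul_eq_mul, s]
      field_simp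
      ring
    · have hiS : i ∉ S := fun h => hi (mem_erase.mpr ⟨hij, h⟩)
      simp [hβ.1 i hiS, hβ'.1 i hiS]
  · rw [sum_add_smul_smul_eq β hnull, hβ.2]

lemma exists_null_direction_of_not_minSpanning {b : Fin N → ℝ} (hb : ∑ i, b i • c i = e1 hK)
    (hT : ¬MinSpanning hK c (univ.filter fun i => b i ≠ 0)) :
    ∃ γ : Fin N → ℝ, γ ≠ 0 ∧ (∀ i, b i = 0 → γ i = 0) ∧ ∑ i, γ i • c i = 0 := by
  set T := univ.filter fun i => b i ≠ 0
  obtain ⟨T', hT'T, hT'⟩ : ∃ T' ⊂ T, Spanning hK c T' := by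
    by_contra! h
    exact hT ⟨IsRep.spanning (β := b) ⟨fun i hi => by simpa [T] using hi, hb⟩, h⟩
  obtain ⟨b', hb'⟩ := (spanning_iff_exists_isRep hK c).mp hT'
  refine ⟨b' - b, ?_, fun i hi => ?_, by simp [sub_smul, sum_sub_distrib, hb, hb'.2]⟩
  · obtain ⟨j, hjT, hjT'⟩ := exists_of_ssubset hT'T
    exact Function.ne_iff.mpr ⟨j, by simpa [hb'.1 j hjT', T] using hjT⟩
  · have : i ∉ T' := fun h => by simpa [T, hi] using hT'T.subset h
    simp [hi, hb'.1 i this]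

/-- The `ℓ¹`-least representation of `e₁` has linearly independent support, hence is `β^T` for a
minimally spanning `T`; otherwise it could be moved along a null direction, without increasing
its `ℓ¹` norm, to a representation with smaller support. -/
theorem UniqueMin.phi_lt_sum_abs (hUM : UniqueMin hK c S) {b : Fin N → ℝ}
    (hb : ∑ i, b i • c i = e1 hK) (hne : b ≠ betaVec hK c S) : phi hK c S < ∑ i, |b i| := by
  induction hn : #(univ.filter fun i => b i ≠ 0) using Nat.strong_induction_on generalizing b
    with | _ n IH => ?_
  set T := univ.filter fun i => b i ≠ 0
  by_cases hT : MinSpanning hK c T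
  · have hβ : betaVec hK c T = b :=
      (betaVec_isRep hT.1).eq_of_minSpanning hT ⟨fun i hi => by simpa [T] using hi, hb⟩
    have hTS : T ≠ S := by rintro rfl; exact hne hβ.symm
    calc phi hK c S < phi hK c T := hUM.2 T hT hTS
      _ = ∑ i, |b i| := by rw [phi, hβ]
  obtain ⟨γ, hγ, hsupp, hnull⟩ := exists_null_direction_of_not_minSpanning hb hT
  have move : ∀ δ : Fin N → ℝ, δ ≠ 0 → (∀ i, b i = 0 → δ i = 0) → ∑ i, δ i • c i = 0 →
      ∑ i, Real.sign (b i) * δ i ≤ 0 → ∃ s : ℝ, 0 < s ∧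
        #(univ.filter fun i => (b + s • δ) i ≠ 0) < n ∧ ∑ i, (b + s • δ) i • c i = e1 hK ∧
        ∑ i, |(b + s • δ) i| = ∑ i, |b i| + s * ∑ i, Real.sign (b i) * δ i :=
    fun δ hδ hδsupp hδnull hd => by
      obtain ⟨s, hs, hcard, habs⟩ := exists_card_support_lt_of_sum_sign_mul_nonpos hδsupp hδ hd
      exact ⟨s, hs, hn ▸ hcard, by rw [sum_add_smul_smul_eq b hδnull, hb], habs⟩
  have hle : ∀ b' : Fin N → ℝ, #(univ.filter fun i => b' i ≠ 0) < n →
      ∑ i, b' i • c i = e1 hK → phi hK c S ≤ ∑ i, |b' i| := fun b' hlt hb' => by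
    by_cases h : b' = betaVec hK c S
    · rw [h, phi]
    · exact (IH _ hlt hb' h rfl).le
  have moveNeg := move (-γ) (neg_ne_zero.mpr hγ) (fun i hi => by simp [hsupp i hi])
    (by simp [neg_smul, hnull])
  simp only [Pi.neg_apply, mul_neg, sum_neg_distrib, neg_nonpos] at moveNeg
  rcases lt_trichotomy (∑ i, Real.sign (b i) * γ i) 0 with hd | hd | hd
  · obtain ⟨s, hs, hcard, hrep, habs⟩ := move γ hγ hsupp hnull hd.le
    nlinarith [hle _ hcard hrep]
  · -- zero slope: both endpoints `b + s • γ ≠ b - s' • γ` keep the norm, and one is not `β^{S*}`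
    obtain ⟨s, hs, hcard, hrep, habs⟩ := move γ hγ hsupp hnull hd.le
    obtain ⟨s', hs', hcard', hrep', habs'⟩ := moveNeg hd.ge
    by_cases h₂ : b + s • γ = betaVec hK c S
    · have h₃ : b + s' • -γ ≠ betaVec hK c S := fun h₃ => by
        have : (s + s') • γ = 0 := by linear_combination (norm := module) h₂ - h₃
        exact hγ ((smul_eq_zero.mp this).resolve_left (by positivity))
      have := IH _ hcard' hrep' h₃ rfl
      rw [habs', hd] at this
      linarith
    · have := IH _ hcard hrep h₂ rfl
      rw [habs, hd] at this
      linarith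
  · obtain ⟨s, hs, hcard, hrep, habs⟩ := moveNeg hd.le
    nlinarith [hle _ hcard hrep]

end Representations

section InformationMatrix

variable {hK : 0 < K} {c : Fin N → Fin K → ℝ} {S : Finset (Fin N)} {l : Fin N → ℝ}

lemma infoMat_mulVec (x : Fin K → ℝ) : infoMat c l *ᵥ x = ∑ i, (l i * (c i ⬝ᵥ x)) • c i := by
  simp [infoMat, sum_mulVec, smul_mulVec, vecMulVec_mulVec, mul_smul]

lemma dotProduct_infoMat_mulVec (x : Fin K → ℝ) :
    x ⬝ᵥ (infoMat c l *ᵥ x) = ∑ i, l i * (c i ⬝ᵥ x) ^ 2 := by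
  rw [infoMat_mulVec, dotProduct_comm, sum_dotProduct]
  simp [sq, mul_assoc]

lemma posSemidef_infoMat (hl : ∀ i, 0 ≤ l i) : (infoMat c l).PosSemidef :=
  posSemidef_sum _ fun i _ => (posSemidef_vecMulVec_self_star (c i)).smul (hl i)

lemma Vstar_eq_iSup (hl : ∀ i, 0 ≤ l i) :
    Vstar hK c l = ⨆ y, ENNReal.ofReal (2 * y ⟨0, hK⟩ - y ⬝ᵥ (infoMat c l *ᵥ y)) :=
  iSup_inv_add_smul_one_apply_eq_iSup (posSemidef_infoMat hl)

lemma phi_pos (hS : Spanning hK c S) : 0 < phi hK c S := by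
  refine (sum_nonneg fun i _ => abs_nonneg _).lt_of_ne fun h => ?_
  have hβ0 : ∀ i, betaVec hK c S i = 0 := fun i => by
    simpa using (sum_eq_zero_iff_of_nonneg fun i _ => abs_nonneg _).mp h.symm i (mem_univ i)
  have := (betaVec_isRep hS).2
  simp only [hβ0, zero_smul, sum_const_zero] at this
  simpa [e1] using congrFun this ⟨0, hK⟩

lemma freq_nonneg (i : Fin N) : 0 ≤ freq hK c S i :=
  div_nonneg (abs_nonneg _) (sum_nonneg fun _ _ => abs_nonneg _)

lemma sum_freq (hS : Spanning hK c S) : ∑ i, freq hK c S i = 1 := by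
  simp only [freq, ← sum_div]
  exact div_self (phi_pos hS).ne'

lemma two_mul_sub_le_sq_phi (hS : Spanning hK c S) (y : Fin K → ℝ) :
    2 * y ⟨0, hK⟩ - y ⬝ᵥ (infoMat c (freq hK c S) *ᵥ y) ≤ phi hK c S ^ 2 := by
  have hφ := phi_pos hS
  have hy : y ⟨0, hK⟩ = ∑ i, betaVec hK c S i * (c i ⬝ᵥ y) := by
    rw [← one_mul (y _), ← single_dotProduct, ← e1, ← (betaVec_isRep hS).2]
    simp [sum_dotProduct]
  have := sum_le_sum fun i (_ : i ∈ univ) =>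
    two_mul_mul_le_div_mul_sq_add (betaVec hK c S i) (c i ⬝ᵥ y) hφ
  rw [sum_add_distrib, ← sum_mul, ← mul_sum] at this
  rw [dotProduct_infoMat_mulVec, hy]
  simp only [freq, phi] at this ⊢
  nlinarith

lemma Vstar_freq_le (hS : Spanning hK c S) :
    Vstar hK c (freq hK c S) ≤ ENNReal.ofReal (phi hK c S ^ 2) := by
  rw [Vstar_eq_iSup freq_nonneg]
  exact iSup_le fun y => ENNReal.ofReal_le_ofReal (two_mul_sub_le_sq_phi hS y)

lemma Vstar_eq_ofReal_or_eq_top (hl : ∀ i, 0 ≤ l i) :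
    (∃ x, infoMat c l *ᵥ x = e1 hK ∧ Vstar hK c l = ENNReal.ofReal (x ⟨0, hK⟩)) ∨
      Vstar hK c l = ⊤ := by
  rw [Vstar_eq_iSup hl]
  by_cases h : ∃ x, infoMat c l *ᵥ x = e1 hK
  · obtain ⟨x, hx⟩ := h
    exact .inl ⟨x, hx, iSup_eq_ofReal_of_mulVec_eq_single (posSemidef_infoMat hl) hx⟩
  · exact .inr (iSup_eq_top_of_forall_mulVec_ne_single (not_exists.mp h))

/-- `x₁ = xᵀ M x` is the second moment of `|cᵢ ⬝ x|` under `λ`: squared mean plus variance. -/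
lemma apply_eq_sq_sum_abs_add_variance (hl : ∀ i, 0 ≤ l i) (hl1 : ∑ i, l i = 1)
    {x : Fin K → ℝ} (hx : infoMat c l *ᵥ x = e1 hK) :
    x ⟨0, hK⟩ = (∑ i, |l i * (c i ⬝ᵥ x)|) ^ 2
      + ∑ i, l i * (|c i ⬝ᵥ x| - ∑ j, |l j * (c j ⬝ᵥ x)|) ^ 2 := by
  simp only [abs_mul, abs_of_nonneg (hl _)]
  rw [← sum_mul_sq_eq_sq_add_sum_mul_sq_sub _ _ hl1,
    ← dotProduct_mulVec_eq_of_mulVec_eq_single hx, dotProduct_infoMat_mulVec]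
  simp [sq_abs]

lemma UniqueMin.phi_le_sum_abs (hUM : UniqueMin hK c S) {b : Fin N → ℝ}
    (hb : ∑ i, b i • c i = e1 hK) : phi hK c S ≤ ∑ i, |b i| := by
  by_cases h : b = betaVec hK c S
  · rw [h, phi]
  · exact (hUM.phi_lt_sum_abs hb h).le

lemma UniqueMin.sq_phi_le_apply (hUM : UniqueMin hK c S) (hl : ∀ i, 0 ≤ l i)
    (hl1 : ∑ i, l i = 1) {x : Fin K → ℝ} (hx : infoMat c l *ᵥ x = e1 hK) :
    phi hK c S ^ 2 ≤ x ⟨0, hK⟩ := by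
  rw [apply_eq_sq_sum_abs_add_variance hl hl1 hx]
  have hm := hUM.phi_le_sum_abs ((infoMat_mulVec x).symm.trans hx)
  have hV : 0 ≤ ∑ i, l i * (|c i ⬝ᵥ x| - ∑ j, |l j * (c j ⬝ᵥ x)|) ^ 2 :=
    sum_nonneg fun i _ => mul_nonneg (hl i) (sq_nonneg _)
  nlinarith [phi_pos hUM.1.1]

lemma UniqueMin.sq_phi_lt_apply (hUM : UniqueMin hK c S) (hl : ∀ i, 0 ≤ l i)
    (hl1 : ∑ i, l i = 1) (hne : l ≠ freq hK c S) {x : Fin K → ℝ}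
    (hx : infoMat c l *ᵥ x = e1 hK) : phi hK c S ^ 2 < x ⟨0, hK⟩ := by
  refine (hUM.sq_phi_le_apply hl hl1 hx).lt_of_ne fun heq => hne ?_
  have hrep := (infoMat_mulVec x).symm.trans hx
  rw [apply_eq_sq_sum_abs_add_variance hl hl1 hx] at heq
  set m := ∑ i, |l i * (c i ⬝ᵥ x)|
  have hφ := phi_pos hUM.1.1
  have hm := hUM.phi_le_sum_abs hrep
  have hV := sum_nonneg fun i (_ : i ∈ univ) => mul_nonneg (hl i) (sq_nonneg (|c i ⬝ᵥ x| - m))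
  have hmφ : m = phi hK c S := by nlinarith
  have hV0 : ∑ i, l i * (|c i ⬝ᵥ x| - m) ^ 2 = 0 := by nlinarith
  have hβ : (fun i => l i * (c i ⬝ᵥ x)) = betaVec hK c S := by
    by_contra h
    exact (hUM.phi_lt_sum_abs hrep h).ne' hmφ
  funext i
  rw [freq, ← hβ, abs_mul, abs_of_nonneg (hl i)]
  rcases eq_or_ne (l i) 0 with h0 | h0
  · simp [h0]
  · have ht := (sum_eq_zero_iff_of_nonneg fun j _ =>
      mul_nonneg (hl j) (sq_nonneg (|c j ⬝ᵥ x| - m))).mp hV0 i (mem_univ i)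
    rw [show |c i ⬝ᵥ x| = phi hK c S by nlinarith [(mul_eq_zero.mp ht).resolve_left h0]]
    field_simp

lemma UniqueMin.ofReal_sq_phi_le_Vstar (hUM : UniqueMin hK c S) (hl : ∀ i, 0 ≤ l i)
    (hl1 : ∑ i, l i = 1) : ENNReal.ofReal (phi hK c S ^ 2) ≤ Vstar hK c l := by
  rcases Vstar_eq_ofReal_or_eq_top hl with ⟨x, hx, hV⟩ | hV <;> rw [hV]
  · exact ENNReal.ofReal_le_ofReal (hUM.sq_phi_le_apply hl hl1 hx)
  · exact le_top

lemma UniqueMin.ofReal_sq_phi_lt_Vstar (hUM : UniqueMin hK c S) (hl : ∀ i, 0 ≤ l i)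
    (hl1 : ∑ i, l i = 1) (hne : l ≠ freq hK c S) :
    ENNReal.ofReal (phi hK c S ^ 2) < Vstar hK c l := by
  rcases Vstar_eq_ofReal_or_eq_top hl with ⟨x, hx, hV⟩ | hV <;> rw [hV]
  · have := hUM.sq_phi_lt_apply hl hl1 hne hx
    exact (ENNReal.ofReal_lt_ofReal_iff ((sq_nonneg _).trans_lt this)).mpr this
  · exact ENNReal.ofReal_lt_top

end InformationMatrix

theorem Vstar_unique_minimizer_general {K N : ℕ} (hK : 0 < K)
    (c : Fin N → Fin K → ℝ) (Sstar : Finset (Fin N))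
    (hUM : UniqueMin hK c Sstar) :
    Vstar hK c (freq hK c Sstar) = ENNReal.ofReal ((phi hK c Sstar) ^ 2) ∧
    ∀ l : Fin N → ℝ, (∀ i, 0 ≤ l i) → (∑ i, l i) = 1 → l ≠ freq hK c Sstar →
      ENNReal.ofReal ((phi hK c Sstar) ^ 2) < Vstar hK c l :=
  ⟨le_antisymm (Vstar_freq_le hUM.1.1)
      (hUM.ofReal_sq_phi_le_Vstar freq_nonneg (sum_freq hUM.1.1)),
    fun _ hl hl1 hne => hUM.ofReal_sq_phi_lt_Vstar hl hl1 hne⟩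

/-- Under Unique Minimizer, `V*(λ*) = φ(S*)²` and `V*(λ) > φ(S*)²` for
every other `λ` in the simplex: `λ*` is the unique minimizer of `V*` on the simplex. -/
theorem Vstar_unique_minimizer {K N : ℕ} (hK : 0 < K) (hN : 0 < N)
    (c : Fin N → Fin K → ℝ) (Sstar : Finset (Fin N))
    (hspan : Spanning hK c Finset.univ) (hUM : UniqueMin hK c Sstar) :
    Vstar hK c (freq hK c Sstar) = ENNReal.ofReal ((phi hK c Sstar) ^ 2) ∧
    ∀ l : Fin N → ℝ, (∀ i, 0 ≤ l i) → (∑ i, l i) = 1 → l ≠ freq hK c Sstar →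
      ENNReal.ofReal ((phi hK c Sstar) ^ 2) < Vstar hK c l :=
  Vstar_unique_minimizer_general hK c Sstar hUM

end LearningTraps
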